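/- arXiv:1703.10839 — 2 statements merged into one kernel-verified Lean document; each statement's English description precedes it below -/
import Mathlib

section
/- Let V be a finite-dimensional real vector space, Q a quadratic form on V, and Z : V → ℂ an ℝ-linear map such that Q is negative definite on ker Z. Then there exist a norm ‖·‖ on V and a constant C > 0 such that every v ∈ V with Q(v) ≥ 0 satisfies |Z(v)| ≥ C·‖v‖. -/
/-!
The cone `{Q ≥ 0}` is closed and meets `ker Z` only in `0`, so `‖Z‖` does not vanish on its
intersection with the unit sphere of a norm on `V`. That intersection is compact, hence `‖Z‖` is
bounded below there by some `C > 0`, and both sides of `C * ‖v‖ ≤ ‖Z v‖` are homogeneous of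
degree one.
-/

theorem QuadraticMap.continuous_of_finiteDimensional {E : Type*} [NormedAddCommGroup E]
    [NormedSpace ℝ E] [FiniteDimensional ℝ E] (Q : QuadraticForm ℝ E) : Continuous Q := by
  let B := (QuadraticMap.associated (R := ℝ) Q).toContinuousBilinearMap
  have hB : ∀ v, B v v = Q v := QuadraticMap.associated_eq_self_apply ℝ Q
  exact (B.continuous₂.comp (continuous_id.prodMk continuous_id)).congr hB

theorem QuadraticMap.exists_pos_mul_norm_le_of_neg_on_ker {E F : Type*} [NormedAddCommGroup E]
    [NormedSpace ℝ E] [FiniteDimensional ℝ E] [NormedAddCommGroup F] [NormedSpace ℝ F]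
    (Q : QuadraticForm ℝ E) (Z : E →ₗ[ℝ] F) (hker : ∀ v, Z v = 0 → v ≠ 0 → Q v < 0) :
    ∃ C > 0, ∀ v, 0 ≤ Q v → C * ‖v‖ ≤ ‖Z v‖ := by
  let S := Metric.sphere (0 : E) 1 ∩ {v | 0 ≤ Q v}
  have hS : IsCompact S := (isCompact_sphere 0 1).inter_right
    (isClosed_le continuous_const Q.continuous_of_finiteDimensional)
  have hZ : Continuous fun v => ‖Z v‖ := continuous_norm.comp Z.continuous_of_finiteDimensional
  have hpos : ∀ w ∈ S, 0 < ‖Z w‖ := by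
    rintro w ⟨hw1, hQw⟩
    refine norm_pos_iff.2 fun hZw => (hker w hZw ?_).not_ge hQw
    rintro rfl
    simp at hw1
  obtain ⟨C, hC, hCS⟩ := hS.exists_forall_le' hZ.continuousOn hpos
  refine ⟨C, hC, fun v hQv => ?_⟩
  rcases eq_or_ne v 0 with rfl | hv
  · simp
  have hv' : 0 < ‖v‖ := norm_pos_iff.2 hv
  have hunit : ‖v‖⁻¹ • v ∈ S := by
    refine ⟨by simp [norm_smul, hv'.ne'], ?_⟩
    show 0 ≤ Q (‖v‖⁻¹ • v)
    rw [QuadraticMap.map_smul]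
    positivity
  calc C * ‖v‖ ≤ ‖Z (‖v‖⁻¹ • v)‖ * ‖v‖ := by gcongr; exact hCS _ hunit
    _ = ‖Z v‖ := by rw [map_smul, norm_smul, norm_inv, norm_norm]; field_simp

theorem stmt12 (V : Type*) [AddCommGroup V] [Module ℝ V]
    [FiniteDimensional ℝ V] (Q : QuadraticForm ℝ V) (Z : V →ₗ[ℝ] ℂ)
    (hker : ∀ v : V, Z v = 0 → v ≠ 0 → Q v < 0) :
    ∃ (N : Seminorm ℝ V) (C : ℝ), 0 < C ∧ (∀ v : V, N v = 0 → v = 0) ∧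
      ∀ v : V, 0 ≤ Q v → C * N v ≤ ‖Z v‖ := by
  let e := (Module.finBasis ℝ V).equivFun
  obtain ⟨C, hC, hCZ⟩ := (Q.comp e.symm.toLinearMap).exists_pos_mul_norm_le_of_neg_on_ker
    (Z ∘ₗ e.symm.toLinearMap) fun w hZw hw => hker _ hZw (e.symm.map_ne_zero_iff.2 hw)
  refine ⟨(normSeminorm ℝ _).comp e.toLinearMap, C, hC, fun v hv => ?_, fun v hQv => ?_⟩
  · simpa using hv
  · simpa using hCZ (e v) (by simpa using hQv)
end

section
/- Let σ = (A, Z) be a weak stability condition on a triangulated category and E an exceptional object contained in A with Z(E) ≠ 0. Let A₁ ⊂ A be a full abelian subcategory closed under the operations of Lemma on restriction of short exact sequences, and suppose F ∈ A₁ is semistable in A₁ with slope μ(F) ≤ μ(E), where for any quotient F ↠ B in A there are short exact sequences 0 → A → A₁' → E⊗V → 0 and 0 → E⊗V → B → B₁ → 0 with A₁', B₁ ∈ A₁ and V = Hom(E, B). Then F is semistable as an object of A. More generally, any F ∈ A₁ satisfies μ⁻_A(F) ≥ min{μ⁻_{A₁}(F), μ(E)}, where μ⁻ denotes the smallest Harder–Narasimhan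 slope computed in A and in A₁ respectively. -/
/-!
Every quotient `B` of `F` is an extension of a quotient `B₁ ∈ A₁` of `F` by `E^{⊕n}`, so
`Z(B) = n • Z(E) + Z(B₁)`. Both conditions `μ(w) ≥ μ(F)` and `μ(w) ≥ c` cut out additive
submonoids of `ℂ`, so they pass from `Z(E)` and `Z(B₁)` to `Z(B)`.
-/

open CategoryTheory Limits

universe v u

/-- `μ(z) ≤ μ(w)` for the slope `μ = -Re/Im` (with `μ = +∞` when `Im = 0`),
encoded without division. -/
def slopeLE (z w : ℂ) : Prop := w.re * z.im ≤ z.re * w.im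

def slopeGECone (z : ℂ) : AddSubmonoid ℂ where
  carrier := {w | slopeLE z w}
  zero_mem' := by simp [slopeLE]
  add_mem' {a b} ha hb := by
    simp only [Set.mem_ofPred_eq, slopeLE, Complex.add_re, Complex.add_im] at *
    linarith

def slopeGERealCone (c : ℝ) : AddSubmonoid ℂ where
  carrier := {w | c * w.im ≤ -w.re}
  zero_mem' := by simp
  add_mem' {a b} ha hb := by
    simp only [Set.mem_ofPred_eq, Complex.add_re, Complex.add_im] at *
    linarith

theorem Complex.eq_zero_of_add_eq_zero_of_im_nonneg {z w : ℂ}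
    (hz : 0 ≤ z.im) (hw : 0 ≤ w.im) (hz' : z.im = 0 → z.re ≤ 0)
    (hw' : w.im = 0 → w.re ≤ 0) (h : z + w = 0) : z = 0 := by
  have him : z.im + w.im = 0 := by simpa using congrArg Complex.im h
  have hre : z.re + w.re = 0 := by simpa using congrArg Complex.re h
  have hzi : z.im = 0 := by linarith
  have hwi : w.im = 0 := by linarith
  exact Complex.ext (by simp only [Complex.zero_re]; linarith [hz' hzi, hw' hwi]) hzi

section

variable {C : Type u} [Category.{v} C] [Abelian C]

structure IsWeakStabilityFunction (Z : C → ℂ) : Prop where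
  map_cokernel : ∀ (X Y : C) (f : X ⟶ Y), Mono f → Z Y = Z X + Z (cokernel f)
  im_nonneg : ∀ X : C, 0 ≤ (Z X).im
  re_nonpos_of_im_eq_zero : ∀ X : C, (Z X).im = 0 → (Z X).re ≤ 0

namespace IsWeakStabilityFunction

variable {Z : C → ℂ}

theorem map_isZero (hZ : IsWeakStabilityFunction Z) {W : C} (hW : IsZero W) : Z W = 0 := by
  have hK : Z (cokernel (𝟙 W)) = 0 := by
    simpa using (hZ.map_cokernel W W (𝟙 W) inferInstance).symm
  have hmono : Mono (0 : W ⟶ cokernel (𝟙 W)) := ⟨fun g h _ => hW.eq_of_tgt g h⟩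
  have hsum := hZ.map_cokernel W _ 0 hmono
  rw [hK] at hsum
  exact Complex.eq_zero_of_add_eq_zero_of_im_nonneg (hZ.im_nonneg _) (hZ.im_nonneg _)
    (hZ.re_nonpos_of_im_eq_zero _) (hZ.re_nonpos_of_im_eq_zero _) hsum.symm

theorem map_iso (hZ : IsWeakStabilityFunction Z) {X Y : C} (e : X ≅ Y) : Z X = Z Y := by
  rw [hZ.map_cokernel X Y e.hom inferInstance,
    hZ.map_isZero ((isZero_zero C).of_iso (cokernel.ofEpi e.hom)), add_zero]

theorem map_shortExact (hZ : IsWeakStabilityFunction Z) {S : ShortComplex C}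
    (hS : S.ShortExact) : Z S.X₂ = Z S.X₁ + Z S.X₃ := by
  have := hS.epi_g
  rw [hZ.map_cokernel _ _ S.f hS.mono_f]
  exact congrArg (Z S.X₁ + ·)
    (hZ.map_iso (IsColimit.coconePointUniqueUpToIso (cokernelIsCokernel S.f) hS.gIsCokernel))

theorem map_biproduct [HasFiniteBiproducts C] (hZ : IsWeakStabilityFunction Z) {n : ℕ}
    (f : Fin n → C) : Z (⨁ f) = ∑ i, Z (f i) := by
  induction n with
  | zero =>
    refine hZ.map_isZero ?_
    rw [IsZero.iff_id_eq_zero]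
    exact biproduct.hom_ext _ _ fun j => j.elim0
  | succ n ih =>
    have tail : ⨁ (fun j : Fin n => f j.succ) ≅ ⨁ Subtype.restrict (fun j => j ≠ 0) f :=
      biproduct.whiskerEquiv (g := Subtype.restrict _ f) (finSuccAboveEquiv 0)
        fun _ => Iso.refl _
    rw [hZ.map_cokernel _ _ (biproduct.ι f 0) inferInstance,
      hZ.map_iso (cokernelBiproductιIso f 0), ← hZ.map_iso tail, ih, Fin.sum_univ_succ]

theorem map_biproduct_const [HasFiniteBiproducts C] (hZ : IsWeakStabilityFunction Z)
    (E : C) (n : ℕ) : Z (⨁ fun _ : Fin n => E) = n • Z E := by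
  simp [hZ.map_biproduct]

theorem map_mem_of_epi [HasFiniteBiproducts C] (hZ : IsWeakStabilityFunction Z)
    {E F : C} {P : Set C}
    (hres : ∀ (B : C) (π : F ⟶ B), Epi π →
      ∃ (n : ℕ) (B₁ : C), B₁ ∈ P ∧
        ∃ (ι : (⨁ fun _ : Fin n => E) ⟶ B) (q : B ⟶ B₁) (w : ι ≫ q = 0),
          (ShortComplex.mk ι q w).ShortExact)
    (K : AddSubmonoid ℂ) (hE : Z E ∈ K)
    (hP : ∀ (B : C) (π : F ⟶ B), Epi π → B ∈ P → ¬ IsZero B → Z B ∈ K)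
    {B : C} (π : F ⟶ B) [Epi π] : Z B ∈ K := by
  obtain ⟨n, B₁, hB₁P, ι, q, w, hS⟩ := hres B π inferInstance
  have hZB : Z B = n • Z E + Z B₁ := by
    rw [← hZ.map_biproduct_const]
    exact hZ.map_shortExact hS
  have hB₁ : Z B₁ ∈ K := by
    by_cases h : IsZero B₁
    · rw [hZ.map_isZero h]
      exact K.zero_mem
    · have := hS.epi_g
      exact hP B₁ (π ≫ q) inferInstance hB₁P h
  rw [hZB]
  exact K.add_mem (K.nsmul_mem hE n) hB₁

end IsWeakStabilityFunction

end

variable {C : Type u} [Category.{v} C] [Abelian C] [HasFiniteBiproducts C]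

theorem stmt17_general (Z : C → ℂ)
    (hZadd : ∀ (X Y : C) (f : X ⟶ Y), Mono f → Z Y = Z X + Z (cokernel f))
    (hZim : ∀ X : C, 0 ≤ (Z X).im)
    (hZre : ∀ X : C, (Z X).im = 0 → (Z X).re ≤ 0)
    (E : C)
    (P : Set C) (F : C)
    (hres : ∀ (B : C) (π : F ⟶ B), Epi π →
      ∃ (n : ℕ) (A₁ B₁ : C), A₁ ∈ P ∧ B₁ ∈ P ∧
        (∃ (ι : kernel π ⟶ A₁) (q : A₁ ⟶ ⨁ (fun _ : Fin n => E))
            (w : ι ≫ q = 0), (ShortComplex.mk ι q w).ShortExact) ∧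
        (∃ (ι' : (⨁ fun _ : Fin n => E) ⟶ B) (q' : B ⟶ B₁)
            (w' : ι' ≫ q' = 0), (ShortComplex.mk ι' q' w').ShortExact)) :
    ((∀ (B : C) (π : F ⟶ B), Epi π → B ∈ P → ¬ IsZero B →
        slopeLE (Z F) (Z B)) →
      slopeLE (Z F) (Z E) →
      ∀ (B : C) (π : F ⟶ B), Epi π → ¬ IsZero B → slopeLE (Z F) (Z B)) ∧
    (∀ c : ℝ,
      (∀ (B : C) (π : F ⟶ B), Epi π → B ∈ P → ¬ IsZero B →
        c * (Z B).im ≤ -(Z B).re) →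
      c * (Z E).im ≤ -(Z E).re →
      ∀ (B : C) (π : F ⟶ B), Epi π → ¬ IsZero B →
        c * (Z B).im ≤ -(Z B).re) := by
  have hZ : IsWeakStabilityFunction Z := ⟨hZadd, hZim, hZre⟩
  have hquot : ∀ (B : C) (π : F ⟶ B), Epi π →
      ∃ (n : ℕ) (B₁ : C), B₁ ∈ P ∧
        ∃ (ι : (⨁ fun _ : Fin n => E) ⟶ B) (q : B ⟶ B₁) (w : ι ≫ q = 0),
          (ShortComplex.mk ι q w).ShortExact := by
    intro B π hπ
    obtain ⟨n, -, B₁, -, hB₁P, -, hS⟩ := hres B π hπ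
    exact ⟨n, B₁, hB₁P, hS⟩
  exact ⟨fun hP hE _ π _ _ => hZ.map_mem_of_epi hquot (slopeGECone (Z F)) hE hP π,
    fun c hP hE _ π _ _ => hZ.map_mem_of_epi hquot (slopeGERealCone c) hE hP π⟩

/-- Semistability of objects of the heart `A` (here: the abelian category `C`)
with respect to an exceptional object (Remark 5.12 of the paper): let `Z` be a
weak stability function on `C`, `E ∈ C` with `Z(E) ≠ 0`, and `P` the class of
objects of the full subcategory `A₁`. Assume that for every quotient `F ↠ B`
there are short exact sequences `0 → ker π → A₁' → E⊗V → 0` and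
`0 → E⊗V → B → B₁ → 0` with `A₁', B₁ ∈ P` and `V = Hom(E,B)` (of some finite
dimension `n`). Then:
(1) if `F` is semistable in `A₁` with `μ(F) ≤ μ(E)`, it is semistable in `A`;
(2) more generally `μ⁻_A(F) ≥ min{μ⁻_{A₁}(F), μ(E)}`, phrased as: for every
real `c`, if all nonzero quotients of `F` in `A₁` have slope `≥ c` and
`μ(E) ≥ c`, then all nonzero quotients of `F` in `A` have slope `≥ c`
(`μ(B) ≥ c` is encoded by `c·Im Z(B) ≤ -Re Z(B)`). -/
theorem stmt17 (Z : C → ℂ)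
    (hZadd : ∀ (X Y : C) (f : X ⟶ Y), Mono f → Z Y = Z X + Z (cokernel f))
    (hZim : ∀ X : C, 0 ≤ (Z X).im)
    (hZre : ∀ X : C, (Z X).im = 0 → (Z X).re ≤ 0)
    (E : C) (hZE : Z E ≠ 0)
    (P : Set C) (F : C) (hFP : F ∈ P)
    (hres : ∀ (B : C) (π : F ⟶ B), Epi π →
      ∃ (n : ℕ) (A₁ B₁ : C), A₁ ∈ P ∧ B₁ ∈ P ∧
        (∃ (ι : kernel π ⟶ A₁) (q : A₁ ⟶ ⨁ (fun _ : Fin n => E))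
            (w : ι ≫ q = 0), (ShortComplex.mk ι q w).ShortExact) ∧
        (∃ (ι' : (⨁ fun _ : Fin n => E) ⟶ B) (q' : B ⟶ B₁)
            (w' : ι' ≫ q' = 0), (ShortComplex.mk ι' q' w').ShortExact)) :
    ((∀ (B : C) (π : F ⟶ B), Epi π → B ∈ P → ¬ IsZero B →
        slopeLE (Z F) (Z B)) →
      slopeLE (Z F) (Z E) →
      ∀ (B : C) (π : F ⟶ B), Epi π → ¬ IsZero B → slopeLE (Z F) (Z B)) ∧
    (∀ c : ℝ,
      (∀ (B : C) (π : F ⟶ B), Epi π → B ∈ P → ¬ IsZero B →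
        c * (Z B).im ≤ -(Z B).re) →
      c * (Z E).im ≤ -(Z E).re →
      ∀ (B : C) (π : F ⟶ B), Epi π → ¬ IsZero B →
        c * (Z B).im ≤ -(Z B).re) :=
  stmt17_general Z hZadd hZim hZre E P F hres
end
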